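/- The class of finite undirected graphs of entanglement at most n is closed under taking minors: if G is a minor of H, then Ent(G) ≤ Ent(H). -/

import Mathlib

/-
If `Br` is a branch-set model of `G` in `H` and the thief escapes `k` cops on `G`, she also
escapes `k` cops on `H`: while the `G`-thief sits on `u`, the `H`-thief walks inside the
connected set `Br u` towards a vertex adjacent to the branch set of the next `G`-vertex, and
the `G`-cops are `H`-cops read modulo branch sets. The `G`-cops can only be placed on `u`, so
the `G`-move of a round is fixed lazily: it is a skip until an `H`-cop lands on the thief in
`Br u`; then some `G`-cop guards an emptied branch set (or there is room for a new one) and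
is moved onto `u`, after which the `H`-thief re-routes towards the new target.
-/

open SimpleGraph

/-- Cops' winning positions in the entanglement game on `G` with `k` cops (Thief on
`v`, cops on `C`, Cops to move): Cops may skip, place a new cop on `v`, or move a
placed cop to `v`; Thief must then move along an edge to a cop-free vertex. -/
inductive CopsWin {V : Type*} [DecidableEq V] (G : SimpleGraph V) (k : ℕ) :
    V → Finset V → Prop
  | step {v : V} {C C' : Finset V}
      (hmove : C' = C ∨ C' = insert v C ∨ ∃ x ∈ C, C' = insert v (C.erase x))
      (hcard : C'.card ≤ k)
      (hnext : ∀ w, G.Adj v w → w ∉ C' → CopsWin G k w C') :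
      CopsWin G k v C

/-- The entanglement of `G`. -/
noncomputable def entanglement {V : Type*} [DecidableEq V] (G : SimpleGraph V) : ℕ :=
  sInf {k | ∀ v : V, CopsWin G k v ∅}

/-- `G` is a minor of `H` (branch-set formulation, equivalent to being obtainable
by edge deletions, edge contractions and deletion of isolated vertices). -/
def IsMinor {U V : Type*} (G : SimpleGraph U) (H : SimpleGraph V) : Prop :=
  ∃ Br : U → Set V, (∀ u, (Br u).Nonempty) ∧
    (Pairwise fun u u' => Disjoint (Br u) (Br u')) ∧
    (∀ u, (H.induce (Br u)).Connected) ∧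
    ∀ u u', G.Adj u u' → ∃ x ∈ Br u, ∃ y ∈ Br u', H.Adj x y

section Game

variable {V : Type*} [DecidableEq V] {G : SimpleGraph V} {k : ℕ}

def IsCopMove (v : V) (C C' : Finset V) : Prop :=
  C' = C ∨ C' = insert v C ∨ ∃ x ∈ C, C' = insert v (C.erase x)

theorem IsCopMove.skip (v : V) (C : Finset V) : IsCopMove v C C := Or.inl rfl

theorem IsCopMove.subset_insert {v : V} {C C' : Finset V} (h : IsCopMove v C C') :
    C' ⊆ insert v C := by
  rcases h with rfl | rfl | ⟨x, -, rfl⟩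
  · exact Finset.subset_insert _ _
  · exact Finset.Subset.rfl
  · exact Finset.insert_subset_insert _ (Finset.erase_subset _ _)

theorem exists_escape_of_not_copsWin {v : V} {C C' : Finset V} (h : ¬ CopsWin G k v C)
    (hmove : IsCopMove v C C') (hcard : C'.card ≤ k) :
    ∃ w, G.Adj v w ∧ w ∉ C' ∧ ¬ CopsWin G k w C' := by
  by_contra! hwin
  exact h (.step hmove hcard hwin)

theorem not_copsWin_of_invariant (P : V → Finset V → Prop)
    (hP : ∀ ⦃v C C'⦄, P v C → IsCopMove v C C' → C'.card ≤ k →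
      ∃ w, G.Adj v w ∧ w ∉ C' ∧ P w C')
    {v : V} {C : Finset V} (hv : P v C) : ¬ CopsWin G k v C := by
  intro hwin
  induction hwin with
  | step hmove hcard _ ih =>
    obtain ⟨w, hvw, hwC, hw⟩ := hP hv hmove hcard
    exact ih w hvw hwC hw

theorem copsWin_fintype_card [Fintype V] (C : Finset V) :
    ∀ v ∉ C, CopsWin G (Fintype.card V) v C :=
  Finset.strongDownwardInduction (p := fun C => ∀ v ∉ C, CopsWin G (Fintype.card V) v C)
    (fun _ ih _ _ hv => .step (Or.inr (Or.inl rfl)) (Finset.card_le_univ _)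
      fun w _ hw => ih (Finset.card_le_univ _) (Finset.ssubset_insert hv) w hw)
    C (Finset.card_le_univ C)

theorem copsWin_entanglement [Fintype V] (G : SimpleGraph V) (v : V) :
    CopsWin G (entanglement G) v ∅ :=
  Nat.sInf_mem (s := {k | ∀ v : V, CopsWin G k v ∅})
    ⟨_, fun v => copsWin_fintype_card ∅ v (Finset.notMem_empty v)⟩ v

end Game

section Routes

variable {V : Type*} {H : SimpleGraph V}

def ExitRoute (H : SimpleGraph V) (S T : Set V) (D : Finset V) (x : V) : Prop :=
  ∃ (a b : V) (p : H.Walk x a), p.IsPath ∧ (∀ q ∈ p.support, q ∈ S ∧ (q ∈ D → q = x)) ∧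
    b ∈ T ∧ H.Adj a b

variable {S T : Set V} {D D' : Finset V} {x : V}

theorem ExitRoute.start_mem (h : ExitRoute H S T D x) : x ∈ S := by
  obtain ⟨a, b, p, -, hp, -⟩ := h
  exact (hp x p.start_mem_support).1

theorem ExitRoute.anti [DecidableEq V] (h : ExitRoute H S T D x) (hD : D' ⊆ insert x D) :
    ExitRoute H S T D' x := by
  obtain ⟨a, b, p, hpath, hp, hb, hab⟩ := h
  refine ⟨a, b, p, hpath, fun q hq => ⟨(hp q hq).1, fun hqD' => ?_⟩, hb, hab⟩
  rcases Finset.mem_insert.mp (hD hqD') with rfl | hqD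
  exacts [rfl, (hp q hq).2 hqD]

theorem ExitRoute.step (h : ExitRoute H S T D x) :
    (∃ b ∈ T, H.Adj x b) ∨ ∃ q, H.Adj x q ∧ q ∉ D ∧ ExitRoute H S T D q := by
  obtain ⟨a, b, p, hpath, hp, hb, hab⟩ := h
  cases p with
  | nil => exact .inl ⟨b, hb, hab⟩
  | cons hxq p =>
    rw [Walk.cons_isPath_iff] at hpath
    simp only [Walk.support_cons, List.mem_cons, forall_eq_or_imp] at hp
    -- the path never returns to `x`, so its remaining vertices avoid `D`
    have hpD : ∀ q ∈ p.support, q ∉ D := fun q hq hqD =>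
      hpath.2 (((hp.2 q hq).2 hqD) ▸ hq)
    exact .inr ⟨_, hxq, hpD _ p.start_mem_support, a, b, p, hpath.1,
      fun q hq => ⟨(hp.2 q hq).1, fun hqD => absurd hqD (hpD q hq)⟩, hb, hab⟩

theorem exitRoute_of_connected (hS : (H.induce S).Connected) {a b : V} (hx : x ∈ S)
    (ha : a ∈ S) (hb : b ∈ T) (hab : H.Adj a b) (hD : ∀ y ∈ D, y ∈ S → y = x) :
    ExitRoute H S T D x := by
  classical
  obtain ⟨W⟩ := hS.preconnected ⟨x, hx⟩ ⟨a, ha⟩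
  let e := Embedding.induce (G := H) S
  refine ⟨a, b, W.toPath.val.map e.toHom,
    W.toPath.prop.map e.injective, fun q hq => ?_, hb, hab⟩
  obtain ⟨q, -, rfl⟩ := List.mem_map.mp ((Walk.support_map _ _) ▸ hq)
  exact ⟨q.2, fun hqD => hD q hqD q.2⟩

end Routes

section Covers

variable {U V : Type*} {Br : U → Set V} {C : Finset U} {D D' : Finset V}

def Covers (Br : U → Set V) (C : Finset U) (D : Finset V) : Prop :=
  ∀ y ∈ D, ∃ c ∈ C, y ∈ Br c

theorem Covers.mono (h : Covers Br C D) (hD : D' ⊆ D) : Covers Br C D' :=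
  fun y hy => h y (hD hy)

theorem Covers.insert_of_subset_insert [DecidableEq U] [DecidableEq V] (h : Covers Br C D)
    {x : V} {u : U} (hD : D' ⊆ insert x D) (hx : x ∈ Br u) : Covers Br (insert u C) D' := by
  intro y hy
  rcases Finset.mem_insert.mp (hD hy) with rfl | hyD
  · exact ⟨u, Finset.mem_insert_self _ _, hx⟩
  · obtain ⟨c, hc, hyc⟩ := h y hyD
    exact ⟨c, Finset.mem_insert_of_mem hc, hyc⟩

theorem Covers.erase [DecidableEq U] (h : Covers Br C D) {c₀ : U} (hc₀ : ∀ y ∈ D, y ∉ Br c₀) :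
    Covers Br (C.erase c₀) D := by
  intro y hy
  obtain ⟨c, hc, hyc⟩ := h y hy
  exact ⟨c, Finset.mem_erase.mpr ⟨fun h => hc₀ y hy (h ▸ hyc), hc⟩, hyc⟩

end Covers

structure MinorModel {U V : Type*} (G : SimpleGraph U) (H : SimpleGraph V) where
  branch : U → Set V
  nonempty : ∀ u, (branch u).Nonempty
  pairwise_disjoint : Pairwise fun u u' => Disjoint (branch u) (branch u')
  connected : ∀ u, (H.induce (branch u)).Connected
  exists_adj : ∀ u u', G.Adj u u' → ∃ x ∈ branch u, ∃ y ∈ branch u', H.Adj x y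

theorem IsMinor.nonempty_minorModel {U V : Type*} {G : SimpleGraph U} {H : SimpleGraph V}
    (h : IsMinor G H) : Nonempty (MinorModel G H) :=
  let ⟨Br, hne, hdisj, hconn, hadj⟩ := h
  ⟨⟨Br, hne, hdisj, hconn, hadj⟩⟩

namespace MinorModel

variable {U V : Type*} {G : SimpleGraph U} {H : SimpleGraph V} (M : MinorModel G H)
  {k : ℕ} {u w : U} {C : Finset U} {x : V} {D D' : Finset V}

theorem eq_of_mem_branch {y : V} {c c' : U} (h : y ∈ M.branch c) (h' : y ∈ M.branch c') :
    c = c' := by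
  by_contra hne
  exact Set.disjoint_left.mp (M.pairwise_disjoint hne) h h'

theorem notMem_of_covers (hD : Covers M.branch C D) (hw : w ∉ C) {y : V}
    (hy : y ∈ M.branch w) : y ∉ D := fun hyD => by
  obtain ⟨c, hc, hyc⟩ := hD y hyD
  exact hw (M.eq_of_mem_branch hy hyc ▸ hc)

theorem card_le_card_of_forall_exists_mem_branch (h : ∀ c ∈ C, ∃ y ∈ D, y ∈ M.branch c) :
    C.card ≤ D.card :=
  Finset.card_le_card_of_forall_subsingleton (fun c y => y ∈ M.branch c) h
    fun _ _ _ hc _ hc' => M.eq_of_mem_branch hc.2 hc'.2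

variable [DecidableEq U]

/-- Reuse a cop of `C` whose branch set holds no cop of `D`; if there is none, `D` has a cop in
each branch set of `C` besides the one on `x`, so there is room for a new cop. -/
theorem exists_copMove_covers (huC : u ∉ C) (hCk : C.card ≤ k)
    (hD : Covers M.branch (insert u C) D) (hDk : D.card ≤ k) (hx : x ∈ M.branch u)
    (hxD : x ∈ D) : ∃ C', IsCopMove u C C' ∧ u ∈ C' ∧ C'.card ≤ k ∧ Covers M.branch C' D := by
  classical
  by_cases hidle : ∃ c ∈ C, ∀ y ∈ D, y ∉ M.branch c
  · obtain ⟨c, hc, hcD⟩ := hidle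
    have hcu : u ≠ c := fun h => huC (h ▸ hc)
    refine ⟨insert u (C.erase c), .inr (.inr ⟨c, hc, rfl⟩), Finset.mem_insert_self _ _, ?_, ?_⟩
    · rw [Finset.card_insert_of_notMem fun h => huC (Finset.mem_of_mem_erase h),
        Finset.card_erase_add_one hc]
      exact hCk
    · rw [← Finset.erase_insert_of_ne hcu]
      exact hD.erase hcD
  · push Not at hidle
    have hCD : C.card < D.card := calc
      C.card ≤ (D.erase x).card := M.card_le_card_of_forall_exists_mem_branch fun c hc => by
          obtain ⟨y, hyD, hyc⟩ := hidle c hc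
          refine ⟨y, Finset.mem_erase.mpr ⟨?_, hyD⟩, hyc⟩
          rintro rfl
          exact huC (M.eq_of_mem_branch hx hyc ▸ hc)
      _ < D.card := Finset.card_erase_lt_of_mem hxD
    refine ⟨insert u C, .inr (.inl rfl), Finset.mem_insert_self _ _, ?_, hD⟩
    rw [Finset.card_insert_of_notMem huC]
    omega

/-- Positions `(x, D)` of the game on `H`, cops to move, shadowing an escaping position of the
game on `G`. In `committed`, the `G`-cops have already moved to `C ∋ u` and the `G`-thief answered
`w`; in `tentative`, the `G`-cops are still to move at `(u, C)` and `w` answers a provisional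
skip. -/
inductive Shadow (k : ℕ) : V → Finset V → Prop
  | committed {x : V} {D : Finset V} {u w : U} {C : Finset U} (huC : u ∈ C) (hwC : w ∉ C)
      (hCk : C.card ≤ k) (hD : Covers M.branch C D)
      (hroute : ExitRoute H (M.branch u) (M.branch w) D x) (hw : ¬ CopsWin G k w C) :
      Shadow k x D
  | tentative {x : V} {D : Finset V} {u w : U} {C : Finset U} (huC : u ∉ C) (hwC : w ∉ C)
      (hCk : C.card ≤ k) (hD : Covers M.branch C D)
      (hroute : ExitRoute H (M.branch u) (M.branch w) D x) (hu : ¬ CopsWin G k u C)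
      (hw : ¬ CopsWin G k w C) : Shadow k x D

theorem shadow_of_mem_branch (hx : x ∈ M.branch u) (huC : u ∉ C) (hCk : C.card ≤ k)
    (hD : Covers M.branch C D) (hu : ¬ CopsWin G k u C) : M.Shadow k x D := by
  obtain ⟨w, huw, hwC, hw⟩ := exists_escape_of_not_copsWin hu (.skip u C) hCk
  obtain ⟨a, ha, b, hb, hab⟩ := M.exists_adj u w huw
  refine .tentative huC hwC hCk hD ?_ hu hw
  exact exitRoute_of_connected (M.connected u) hx ha hb hab
    fun y hy hyu => absurd hy (M.notMem_of_covers hD huC hyu)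

theorem exists_move_of_exitRoute (hroute : ExitRoute H (M.branch u) (M.branch w) D x)
    (hwC : w ∉ C) (hCk : C.card ≤ k) (hD : Covers M.branch C D) (hw : ¬ CopsWin G k w C)
    (hnext : ∀ q, ExitRoute H (M.branch u) (M.branch w) D q → M.Shadow k q D) :
    ∃ y, H.Adj x y ∧ y ∉ D ∧ M.Shadow k y D := by
  rcases hroute.step with ⟨b, hb, hxb⟩ | ⟨q, hxq, hqD, hq⟩
  · exact ⟨b, hxb, M.notMem_of_covers hD hwC hb, M.shadow_of_mem_branch hb hwC hCk hD hw⟩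
  · exact ⟨q, hxq, hqD, hnext q hq⟩

variable [DecidableEq V]

theorem exists_move_of_mem_cops (hx : x ∈ M.branch u) (huC : u ∉ C) (hCk : C.card ≤ k)
    (hD : Covers M.branch C D) (hu : ¬ CopsWin G k u C) (hmove : IsCopMove x D D')
    (hD'k : D'.card ≤ k) (hxD' : x ∈ D') : ∃ y, H.Adj x y ∧ y ∉ D' ∧ M.Shadow k y D' := by
  obtain ⟨C', hmoveG, huC', hC'k, hD'⟩ := M.exists_copMove_covers huC hCk
    (hD.insert_of_subset_insert hmove.subset_insert hx) hD'k hx hxD'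
  obtain ⟨w, huw, hwC', hw⟩ := exists_escape_of_not_copsWin hu hmoveG hC'k
  obtain ⟨a, ha, b, hb, hab⟩ := M.exists_adj u w huw
  have hroute : ExitRoute H (M.branch u) (M.branch w) D' x := by
    refine exitRoute_of_connected (M.connected u) hx ha hb hab fun y hy hyu => ?_
    rcases Finset.mem_insert.mp (hmove.subset_insert hy) with rfl | hyD
    exacts [rfl, absurd hyD (M.notMem_of_covers hD huC hyu)]
  exact M.exists_move_of_exitRoute hroute hwC' hC'k hD' hw
    fun q hq => .committed huC' hwC' hC'k hD' hq hw

theorem Shadow.exists_move {M : MinorModel G H} (h : M.Shadow k x D) (hmove : IsCopMove x D D')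
    (hD'k : D'.card ≤ k) : ∃ y, H.Adj x y ∧ y ∉ D' ∧ M.Shadow k y D' := by
  cases h with
  | committed huC hwC hCk hD hroute hw =>
    have hD' : Covers M.branch _ D' := Finset.insert_eq_of_mem huC ▸
      hD.insert_of_subset_insert hmove.subset_insert hroute.start_mem
    exact M.exists_move_of_exitRoute (hroute.anti hmove.subset_insert) hwC hCk hD' hw
      fun q hq => .committed huC hwC hCk hD' hq hw
  | tentative huC hwC hCk hD hroute hu hw =>
    by_cases hxD' : x ∈ D'
    · exact M.exists_move_of_mem_cops hroute.start_mem huC hCk hD hu hmove hD'k hxD'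
    have hD'D : D' ⊆ D := (Finset.subset_insert_iff_of_notMem hxD').mp hmove.subset_insert
    exact M.exists_move_of_exitRoute (hroute.anti (hD'D.trans (Finset.subset_insert _ _))) hwC
      hCk (hD.mono hD'D) hw fun q hq => .tentative huC hwC hCk (hD.mono hD'D) hq hu hw

end MinorModel

theorem IsMinor.copsWin_of_forall_copsWin {U V : Type*} [DecidableEq U] [DecidableEq V]
    {G : SimpleGraph U} {H : SimpleGraph V} (hm : IsMinor G H) {k : ℕ}
    (h : ∀ v, CopsWin H k v ∅) (u : U) : CopsWin G k u ∅ := by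
  obtain ⟨M⟩ := hm.nonempty_minorModel
  obtain ⟨x, hx⟩ := M.nonempty u
  by_contra hu
  refine not_copsWin_of_invariant (M.Shadow k) (fun _ _ _ h => h.exists_move) ?_ (h x)
  exact M.shadow_of_mem_branch hx (Finset.notMem_empty u) (Finset.card_empty.trans_le k.zero_le)
    (fun _ hy => absurd hy (Finset.notMem_empty _)) hu

theorem entanglement_minor_monotone_general {U V : Type*}
    [DecidableEq U] [Fintype V] [DecidableEq V]
    (G : SimpleGraph U) (H : SimpleGraph V) (hm : IsMinor G H) :
    entanglement G ≤ entanglement H :=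
  Nat.sInf_le (hm.copsWin_of_forall_copsWin (copsWin_entanglement H))

/-- graphs of entanglement at most `n` are closed under minors:
if `G` is a minor of `H` then `Ent(G) ≤ Ent(H)`. -/
theorem entanglement_minor_monotone {U V : Type*}
    [Fintype U] [DecidableEq U] [Fintype V] [DecidableEq V]
    (G : SimpleGraph U) (H : SimpleGraph V) (hm : IsMinor G H) :
    entanglement G ≤ entanglement H :=
  entanglement_minor_monotone_general G H hm
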